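/- Under the setting of the previous decomposition, if L′ ≤ Var(Y | X) ≤ U′ and (E[Y|X] − μ̂)² ≤ M², then L′/e ≤ Var((1{D=1}/e)(Y − μ̂) | X) ≤ (U′ + M²)/e. -/

import Mathlib

open MeasureTheory ProbabilityTheory

/-!
Write `I = 1_A` and `Z = Y - μ̂`. Since `I` is independent of `Z` and `I² = I`,
`E[(I Z)²] = e E[Z²]` and `E[I Z] = e E[Z]`, so
`Var(I Z / e) = (Var Y + (1 - e) (E Y - μ̂)²) / e`.
Both bounds follow because `0 ≤ 1 - e ≤ 1`.
-/

section IndicatorWeight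

variable {Ω : Type*} [MeasurableSpace Ω] {P : Measure Ω}
  {A : Set Ω} {Z : Ω → ℝ}

lemma integral_indicator_one_mul_of_indepFun (hA : MeasurableSet A)
    (hZ : AEStronglyMeasurable Z P) (hInd : IndepFun (A.indicator fun _ => (1 : ℝ)) Z P) :
    ∫ ω, A.indicator (fun _ => (1 : ℝ)) ω * Z ω ∂P = P.real A * ∫ ω, Z ω ∂P := by
  rw [hInd.integral_fun_mul_eq_mul_integral
    (measurable_const.indicator hA).aestronglyMeasurable hZ, integral_indicator_const _ hA,
    smul_eq_mul, mul_one]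

lemma variance_indicator_one_mul_of_indepFun [IsProbabilityMeasure P] (hA : MeasurableSet A)
    (hZ : MemLp Z 2 P) (hInd : IndepFun (A.indicator fun _ => (1 : ℝ)) Z P) :
    variance (fun ω => A.indicator (fun _ => (1 : ℝ)) ω * Z ω) P =
      P.real A * (variance Z P + (1 - P.real A) * (∫ ω, Z ω ∂P) ^ 2) := by
  have hIZ : (fun ω => A.indicator (fun _ => (1 : ℝ)) ω * Z ω) = A.indicator Z := by
    ext ω
    by_cases h : ω ∈ A <;> simp [h]
  have hIZ_sq : (fun ω => A.indicator (fun _ => (1 : ℝ)) ω * Z ω) ^ 2 =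
      fun ω => A.indicator (fun _ => (1 : ℝ)) ω * Z ω ^ 2 := by
    ext ω
    by_cases h : ω ∈ A <;> simp [h]
  have hInd_sq : IndepFun (A.indicator fun _ => (1 : ℝ)) (fun ω => Z ω ^ 2) P :=
    hInd.comp measurable_id (measurable_id.pow_const 2)
  rw [variance_eq_sub (hIZ ▸ hZ.indicator hA), hIZ_sq]
  beta_reduce
  rw [integral_indicator_one_mul_of_indepFun (Z := fun ω => Z ω ^ 2) hA
      (hZ.aestronglyMeasurable.pow 2) hInd_sq,
    integral_indicator_one_mul_of_indepFun hA hZ.aestronglyMeasurable hInd,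
    variance_eq_sub hZ]
  simp only [Pi.pow_apply]
  ring

end IndicatorWeight

/-- Bounds on the conditional variance of the IPW residual:
if `L′ ≤ Var(Y) ≤ U′` and `(E[Y] − μ̂)² ≤ M²`, then
`L′/e ≤ Var((1{D=1}/e)(Y − μ̂)) ≤ (U′ + M²)/e` (all conditional on `X`). -/
theorem stmt_1 {Ω : Type*} [MeasurableSpace Ω] (P : Measure Ω) [IsProbabilityMeasure P]
    (A : Set Ω) (hA : MeasurableSet A) (Y : Ω → ℝ) (hY : MemLp Y 2 P)
    (e : ℝ) (he : 0 < e) (he1 : e ≤ 1) (hAe : (P A).toReal = e) (μhat : ℝ)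
    (hInd : IndepFun (A.indicator (fun _ => (1 : ℝ))) Y P)
    (L' U' M : ℝ) (hL : L' ≤ variance Y P) (hU : variance Y P ≤ U')
    (hM : ((∫ ω, Y ω ∂P) - μhat) ^ 2 ≤ M ^ 2) :
    L' / e ≤ variance (fun ω => A.indicator (fun _ => (1 : ℝ)) ω * (Y ω - μhat) / e) P ∧
      variance (fun ω => A.indicator (fun _ => (1 : ℝ)) ω * (Y ω - μhat) / e) P
        ≤ (U' + M ^ 2) / e := by
  have hIndZ : IndepFun (A.indicator fun _ => (1 : ℝ)) (fun ω => Y ω - μhat) P :=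
    hInd.comp measurable_id (measurable_id.sub_const μhat)
  have hVar : variance (fun ω => A.indicator (fun _ => (1 : ℝ)) ω * (Y ω - μhat) / e) P =
      (variance Y P + (1 - e) * ((∫ ω, Y ω ∂P) - μhat) ^ 2) / e := by
    simp_rw [div_eq_mul_inv _ e]
    rw [variance_mul_const, variance_indicator_one_mul_of_indepFun hA
      (Z := fun ω => Y ω - μhat) (hY.sub (memLp_const μhat)) hIndZ, variance_sub_const hY.aestronglyMeasurable,
      integral_sub (hY.integrable one_le_two) (integrable_const μhat), measureReal_def, hAe]
    simp only [integral_const, probReal_univ, smul_eq_mul, one_mul]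
    field_simp
  have hm_sq := sq_nonneg ((∫ ω, Y ω ∂P) - μhat)
  rw [hVar]
  constructor <;> gcongr <;> nlinarith
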